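/- For all i≠j in I and every l∈I, one has ₗr(D_{ij}) = 0 and r_l(D_{ij}) = 0 in the free algebra '𝔣, where D_{ij} = Σ_{k+k'=1−a_{ij}} (−1)^k β(i,j)^{−k} θ_i^{(k)} θ_j θ_i^{(k')}. -/

import Mathlib

open scoped TensorProduct

noncomputable section

/-- A Cartan datum on `I`. -/
structure CartanDatum (I : Type) where
  c : I → I → ℤ
  symm : ∀ i j, c i j = c j i
  pos : ∀ i, 0 < c i i
  even : ∀ i, Even (c i i)
  dvd : ∀ i j, i ≠ j → c i i ∣ 2 * c i j
  nonpos : ∀ i j, i ≠ j → 2 * c i j ≤ 0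

namespace CartanDatum

variable {I : Type} (cd : CartanDatum I)

/-- `d i = (i·i)/2`. -/
def d (i : I) : ℤ := cd.c i i / 2

/-- `a i j = 2(i·j)/(i·i)`. -/
def a (i j : I) : ℤ := 2 * cd.c i j / cd.c i i

/-- Extension of the pairing to `ℕ[I] × ℕ[I]`. -/
def dotN (ν μ : I →₀ ℕ) : ℤ :=
  ν.sum fun i m => μ.sum fun j n => (m : ℤ) * (n : ℤ) * cd.c i j

end CartanDatum

/-- A multiplicative bilinear form `ℕ[I] × ℕ[I] → 𝔽`. -/
structure MultForm (I 𝔽 : Type) [Field 𝔽] where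
  f : (I →₀ ℕ) → (I →₀ ℕ) → 𝔽
  add_left : ∀ ν ν' μ, f (ν + ν') μ = f ν μ * f ν' μ
  add_right : ∀ μ ν ν', f μ (ν + ν') = f μ ν * f μ ν'
  ne_zero : ∀ ν μ, f ν μ ≠ 0

/-- The trivial multiplicative bilinear form, constantly `1`. -/
def trivMF (I 𝔽 : Type) [Field 𝔽] : MultForm I 𝔽 :=
  ⟨fun _ _ => 1, fun _ _ _ => by ring, fun _ _ _ => by ring, fun _ _ => one_ne_zero⟩

variable {I : Type}

/-- The generator `i` of `ℕ[I]`. -/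
def δN (i : I) : I →₀ ℕ := Finsupp.single i 1

/-- The model for the free algebra `'𝔣` on the `θ i`. -/
abbrev FA (𝔽 I : Type) [Field 𝔽] := MonoidAlgebra 𝔽 (FreeMonoid I)

/-- The generator `θ i` of `'𝔣`. -/
def θ (𝔽 : Type) [Field 𝔽] {I : Type} (i : I) : FA 𝔽 I :=
  MonoidAlgebra.of 𝔽 (FreeMonoid I) (FreeMonoid.of i)

/-- The `ℕ[I]`-degree of a word. -/
def wt [DecidableEq I] (w : FreeMonoid I) : I →₀ ℕ :=
  Multiset.toFinsupp (↑(FreeMonoid.toList w))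

/-- Homogeneity of degree `ν` in `'𝔣`. -/
def IsHomog {𝔽 : Type} [Field 𝔽] [DecidableEq I] (ν : I →₀ ℕ) (x : FA 𝔽 I) : Prop :=
  ∀ w ∈ Finsupp.support (x.coeff : FreeMonoid I →₀ 𝔽), wt w = ν

/-- The model for `'𝔣 ⊗ '𝔣` (basis: pairs of words). -/
abbrev TA (𝔽 I : Type) [Field 𝔽] := MonoidAlgebra 𝔽 (FreeMonoid I × FreeMonoid I)

/-- The tensor `x ⊗ y` in the model of `'𝔣 ⊗ '𝔣`. -/
def tmul {𝔽 : Type} [Field 𝔽] (x y : FA 𝔽 I) : TA 𝔽 I :=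
  MonoidAlgebra.ofCoeff <| Finsupp.sum (x.coeff : FreeMonoid I →₀ 𝔽) fun w a =>
    Finsupp.sum (y.coeff : FreeMonoid I →₀ 𝔽) fun u b =>
      (Finsupp.single (w, u) (a * b) : (FreeMonoid I × FreeMonoid I) →₀ 𝔽)

/-- The twisted multiplication on `'𝔣 ⊗ '𝔣`:
`(x₁⊗x₂)(y₁⊗y₂) = v^{-|y₁|·|x₂|} β(|x₂|,|y₁|) x₁y₁ ⊗ x₂y₂`. -/
def tMul [DecidableEq I] {𝔽 : Type} [Field 𝔽] (cd : CartanDatum I) (v : 𝔽)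
    (β : MultForm I 𝔽) (z z' : TA 𝔽 I) : TA 𝔽 I :=
  MonoidAlgebra.ofCoeff <| Finsupp.sum (z.coeff : (FreeMonoid I × FreeMonoid I) →₀ 𝔽) fun p a =>
    Finsupp.sum (z'.coeff : (FreeMonoid I × FreeMonoid I) →₀ 𝔽) fun q b =>
      (Finsupp.single (p.1 * q.1, p.2 * q.2)
        (a * b * v ^ (-(cd.dotN (wt q.1) (wt p.2))) * β.f (wt p.2) (wt q.1))
        : (FreeMonoid I × FreeMonoid I) →₀ 𝔽)

/-- The bilinear form on `'𝔣 ⊗ '𝔣` induced by a form `B` on `'𝔣`: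
`(x₁⊗x₂, y₁⊗y₂) = α(|x₁|,|x₂|) (x₁,y₁) (x₂,y₂)` for homogeneous `x₁, x₂`. -/
def pairT [DecidableEq I] {𝔽 : Type} [Field 𝔽] (α : MultForm I 𝔽)
    (B : FA 𝔽 I →ₗ[𝔽] FA 𝔽 I →ₗ[𝔽] 𝔽) (z z' : TA 𝔽 I) : 𝔽 :=
  Finsupp.sum (z.coeff : (FreeMonoid I × FreeMonoid I) →₀ 𝔽) fun p a =>
    Finsupp.sum (z'.coeff : (FreeMonoid I × FreeMonoid I) →₀ 𝔽) fun q b =>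
      a * b * α.f (wt p.1) (wt p.2)
        * B (MonoidAlgebra.single p.1 1) (MonoidAlgebra.single q.1 1)
        * B (MonoidAlgebra.single p.2 1) (MonoidAlgebra.single q.2 1)

/-- The quantum integer `[n]_c`. -/
def qnum {𝔽 : Type} [Field 𝔽] (c : 𝔽) (n : ℕ) : 𝔽 :=
  (c ^ (n : ℤ) - c ^ (-(n : ℤ))) / (c - c⁻¹)

/-- The quantum factorial `[n]_c!`. -/
def qfact {𝔽 : Type} [Field 𝔽] (c : 𝔽) (n : ℕ) : 𝔽 :=
  ∏ k ∈ Finset.range n, qnum c (k + 1)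

/-- The divided power `θ_i^{(n)} = θ_i^n / [n]_{v_i}!`. -/
def θdiv [DecidableEq I] {𝔽 : Type} [Field 𝔽] (cd : CartanDatum I) (v : 𝔽)
    (i : I) (n : ℕ) : FA 𝔽 I :=
  (qfact (v ^ cd.d i) n)⁻¹ • (θ 𝔽 i) ^ n

/-- The twisted quantum Serre element
`D_{ij} = Σ_{k+k'=1-a_{ij}} (-1)^k β(i,j)^{-k} θ_i^{(k)} θ_j θ_i^{(k')}`. -/
def Dij [DecidableEq I] {𝔽 : Type} [Field 𝔽] (cd : CartanDatum I) (v : 𝔽)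
    (g : I → I → 𝔽) (i j : I) : FA 𝔽 I :=
  ∑ k ∈ Finset.range ((1 - cd.a i j).toNat + 1),
    ((-1 : 𝔽) ^ k * ((g i j)⁻¹) ^ k) •
      (θdiv cd v i k * θ 𝔽 j * θdiv cd v i ((1 - cd.a i j).toNat - k))


/-! Write `u = v^{d_i}` and `M = 1 - a_{ij}`; the quantum integers `[n]_u` are nonzero because `v`
is transcendental. Both twisted derivations lower divided powers of `θ_i` by one step,
`r_i(θ_i^{(n+1)}) = u^{-n} θ_i^{(n)}` and likewise for `ᵢr`. Applied at `l = i` to `D_{ij}`, the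
two terms coming from neighbouring summands then cancel in pairs, using `β(i,j)β(j,i) = 1` and
`i·j = -(M-1) d_i`. At `l = j` every summand becomes a multiple of `θ_i^M`, and the total
coefficient is, up to a unit, `S_M = Σ_{p+q=M} (-1)^p u^{p(M-1)} / ([p]! [q]!)`; the q-Pascal rule
gives `[M+1] S_{M+1} = (1 - u^{2M}) S_M`, so `S_M = 0` for `M ≥ 1`. For any other `l`, every
summand is killed outright. -/

open Finset

section QuantumNumbers

variable {𝔽 : Type} [Field 𝔽] {c : 𝔽}

lemma qnum_zero : qnum c 0 = 0 := by simp [qnum]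

lemma qnum_one (h : qnum c 1 ≠ 0) : qnum c 1 = 1 := by
  simp only [qnum, Nat.cast_one, zpow_one, zpow_neg_one] at h ⊢
  exact div_self (div_ne_zero_iff.mp h).2

lemma ne_zero_of_qnum_one_ne_zero (h : qnum c 1 ≠ 0) : c ≠ 0 := by
  rintro rfl
  simp [qnum] at h

lemma qnum_add (hc : c ≠ 0) (k m : ℕ) :
    qnum c (k + m) = c ^ (-(k : ℤ)) * qnum c m + c ^ (m : ℤ) * qnum c k := by
  simp only [qnum, mul_div_assoc', ← add_div, Nat.cast_add, mul_sub, ← zpow_add₀ hc]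
  ring_nf

lemma zpow_neg_succ_mul_qnum_succ_succ (h1 : qnum c 1 ≠ 0) (n : ℕ) :
    c ^ (-((n + 1 : ℕ) : ℤ)) * qnum c (n + 1 + 1)
      = c ^ (-(2 * ((n + 1 : ℕ) : ℤ))) + c ^ (-(n : ℤ)) * qnum c (n + 1) := by
  have hc := ne_zero_of_qnum_one_ne_zero h1
  rw [qnum_add hc (n + 1) 1, qnum_one h1, mul_add, ← mul_assoc, ← zpow_add₀ hc, ← mul_assoc,
    ← zpow_add₀ hc]
  push_cast
  ring_nf

lemma qfact_succ (n : ℕ) : qfact c (n + 1) = qfact c n * qnum c (n + 1) :=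
  prod_range_succ _ _

lemma qfact_ne_zero (hq : ∀ n, qnum c (n + 1) ≠ 0) (n : ℕ) : qfact c n ≠ 0 :=
  prod_ne_zero_iff.mpr fun k _ => hq k

lemma Transcendental.zpow_of_pos {R K : Type*} [CommRing R] [Field K] [Algebra R K] {x : K}
    (hx : Transcendental R x) {n : ℤ} (hn : 0 < n) : Transcendental R (x ^ n) := by
  lift n to ℕ using hn.le
  rw [zpow_natCast]
  exact hx.pow (by exact_mod_cast hn)

lemma qnum_succ_ne_zero_of_transcendental {R : Type*} [CommRing R] [Nontrivial R] [Algebra R 𝔽]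
    (hc : Transcendental R c) (n : ℕ) : qnum c (n + 1) ≠ 0 := by
  have hc0 : c ≠ 0 := fun h => hc (h ▸ isAlgebraic_zero)
  have key : ∀ k : ℕ, 0 < k → c ^ (k : ℤ) - c ^ (-(k : ℤ)) ≠ 0 := by
    intro k hk h
    have h1 : c ^ (2 * k) = 1 := by
      rw [sub_eq_zero, zpow_neg, zpow_natCast] at h
      rw [two_mul, pow_add]
      nth_rw 2 [h]
      exact mul_inv_cancel₀ (pow_ne_zero _ hc0)
    exact hc (IsAlgebraic.of_pow (by omega) (h1 ▸ isAlgebraic_one))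
  refine div_ne_zero (key _ n.succ_pos) ?_
  simpa using key 1 one_pos

end QuantumNumbers

section SerreSum

variable {𝔽 : Type} [Field 𝔽]

/-- `[M]!⁻¹ Σ_p (-1)^p c^{p(M-1)} [M choose p]_c`, the `q`-binomial sum that vanishes
for `M ≥ 1`. -/
def serreSum (c : 𝔽) (M : ℕ) : 𝔽 :=
  ∑ x ∈ antidiagonal M, (-1) ^ x.1 * c ^ ((x.1 : ℤ) * ((M : ℤ) - 1)) * (qfact c x.1 * qfact c x.2)⁻¹

lemma Finset.Nat.sum_antidiagonal_succ_add {M : Type*} [AddCommMonoid M] {n : ℕ}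
    (F G : ℕ × ℕ → M) (hF : ∀ q, F (0, q) = 0) (hG : ∀ p, G (p, 0) = 0) :
    ∑ x ∈ antidiagonal (n + 1), (F x + G x)
      = ∑ x ∈ antidiagonal n, (F (x.1 + 1, x.2) + G (x.1, x.2 + 1)) := by
  rw [sum_add_distrib, Nat.sum_antidiagonal_succ, Nat.sum_antidiagonal_succ', hF, hG,
    zero_add, zero_add, sum_add_distrib]

lemma neg_one_pow_mul_serreSum (c : 𝔽) (M : ℕ) :
    (-1) ^ M * serreSum c M = ∑ x ∈ antidiagonal M,
      (-1) ^ x.1 * c ^ ((x.2 : ℤ) * ((M : ℤ) - 1)) * (qfact c x.1 * qfact c x.2)⁻¹ := by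
  rw [serreSum, mul_sum, ← Finset.Nat.sum_antidiagonal_swap]
  refine sum_congr rfl fun ⟨p, q⟩ hx => ?_
  rw [HasAntidiagonal.mem_antidiagonal] at hx
  have hsq : ((-1 : 𝔽) ^ q) ^ 2 = 1 := by rw [← pow_mul, pow_mul', neg_one_sq, one_pow]
  subst hx
  dsimp only [Prod.swap]
  linear_combination
    (-1) ^ p * c ^ ((q : ℤ) * (((p + q : ℕ) : ℤ) - 1)) * (qfact c p * qfact c q)⁻¹ * hsq

variable {c : 𝔽} (hq : ∀ n, qnum c (n + 1) ≠ 0)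
include hq

lemma qnum_mul_serreSum_succ (M : ℕ) :
    qnum c (M + 1) * serreSum c (M + 1) = (1 - c ^ (2 * M)) * serreSum c M := by
  have hc := ne_zero_of_qnum_one_ne_zero (hq 0)
  -- q-Pascal: `[p + q] = c^{-p} [q] + c^q [p]` splits each term into two telescoping halves.
  have split : ∀ x ∈ antidiagonal (M + 1),
      qnum c (M + 1) * ((-1) ^ x.1 * c ^ ((x.1 : ℤ) * (((M + 1 : ℕ) : ℤ) - 1))
        * (qfact c x.1 * qfact c x.2)⁻¹)
      = (-1) ^ x.1 * c ^ ((x.1 : ℤ) * M + x.2) * qnum c x.1 * (qfact c x.1 * qfact c x.2)⁻¹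
        + (-1) ^ x.1 * c ^ ((x.1 : ℤ) * ((M : ℤ) - 1)) * qnum c x.2
          * (qfact c x.1 * qfact c x.2)⁻¹ := by
    rintro ⟨p, q⟩ hx
    rw [HasAntidiagonal.mem_antidiagonal] at hx
    have e1 : c ^ (-(p : ℤ)) * c ^ ((p : ℤ) * (((M + 1 : ℕ) : ℤ) - 1))
        = c ^ ((p : ℤ) * ((M : ℤ) - 1)) := by
      rw [← zpow_add₀ hc]; push_cast; ring_nf
    have e2 : c ^ (q : ℤ) * c ^ ((p : ℤ) * (((M + 1 : ℕ) : ℤ) - 1))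
        = c ^ ((p : ℤ) * M + q) := by
      rw [← zpow_add₀ hc]; push_cast; ring_nf
    rw [← hx, qnum_add hc, hx]
    linear_combination ((-1) ^ p * qnum c q * (qfact c p * qfact c q)⁻¹) * e1
      + ((-1) ^ p * qnum c p * (qfact c p * qfact c q)⁻¹) * e2
  rw [serreSum, mul_sum, sum_congr rfl split,
    Finset.Nat.sum_antidiagonal_succ_add _ _ (by simp [qnum_zero]) (by simp [qnum_zero]),
    serreSum, sub_mul, one_mul, mul_sum, ← sum_sub_distrib]
  refine sum_congr rfl fun ⟨p, q⟩ hx => ?_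
  rw [HasAntidiagonal.mem_antidiagonal] at hx
  have e : c ^ (((p + 1 : ℕ) : ℤ) * M + q) = c ^ (2 * M) * c ^ ((p : ℤ) * ((M : ℤ) - 1)) := by
    rw [← zpow_natCast, ← zpow_add₀ hc, ← hx]; push_cast; ring_nf
  simp only [qfact_succ]
  field_simp [qfact_ne_zero hq p, qfact_ne_zero hq q, hq p, hq q]
  linear_combination -(-1) ^ p * e

lemma serreSum_eq_zero {M : ℕ} (hM : M ≠ 0) : serreSum c M = 0 := by
  obtain ⟨n, rfl⟩ := Nat.exists_eq_succ_of_ne_zero hM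
  induction n with
  | zero => simpa [hq 0] using qnum_mul_serreSum_succ hq 0
  | succ n ih =>
    have h := qnum_mul_serreSum_succ hq (n + 1)
    rw [ih n.succ_ne_zero, mul_zero] at h
    exact (mul_eq_zero.mp h).resolve_left (hq _)

end SerreSum

namespace MultForm

variable {𝔽 : Type} [Field 𝔽] (β : MultForm I 𝔽)

lemma f_zero_left (μ : I →₀ ℕ) : β.f 0 μ = 1 := by
  simpa [β.ne_zero] using (β.add_left 0 0 μ).symm

lemma f_zero_right (ν : I →₀ ℕ) : β.f ν 0 = 1 := by
  simpa [β.ne_zero] using (β.add_right ν 0 0).symm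

lemma f_nsmul_left (n : ℕ) (ν μ : I →₀ ℕ) : β.f (n • ν) μ = β.f ν μ ^ n := by
  induction n with
  | zero => simp [f_zero_left]
  | succ n ih => rw [succ_nsmul, β.add_left, ih, pow_succ]

lemma f_nsmul_right (n : ℕ) (ν μ : I →₀ ℕ) : β.f ν (n • μ) = β.f ν μ ^ n := by
  induction n with
  | zero => simp [f_zero_right]
  | succ n ih => rw [succ_nsmul, β.add_right, ih, pow_succ]

end MultForm

namespace CartanDatum

variable (cd : CartanDatum I)

lemma c_self (i : I) : cd.c i i = 2 * cd.d i := by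
  obtain ⟨r, hr⟩ := cd.even i
  unfold d
  omega

lemma zpow_neg_mul_c_self {𝔽 : Type} [Field 𝔽] (v : 𝔽) (i : I) (k : ℤ) :
    v ^ (-(k * cd.c i i)) = (v ^ cd.d i) ^ (-(2 * k)) := by
  rw [← zpow_mul, c_self]
  ring_nf

lemma d_pos (i : I) : 0 < cd.d i := by
  have := cd.pos i
  have := cd.c_self i
  omega

lemma c_eq_d_mul_a {i j : I} (hij : i ≠ j) : cd.c i j = cd.d i * cd.a i j := by
  obtain ⟨t, ht⟩ := cd.dvd i j hij
  have hii := cd.pos i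
  have hd := cd.c_self i
  have h2 : 2 * cd.c i j = 2 * (cd.d i * t) := by rw [ht, hd]; ring
  rw [a, ht, Int.mul_ediv_cancel_left _ hii.ne']
  linarith

lemma a_nonpos {i j : I} (hij : i ≠ j) : cd.a i j ≤ 0 := by
  obtain ⟨t, ht⟩ := cd.dvd i j hij
  have hii := cd.pos i
  have := cd.nonpos i j hij
  rw [a, ht, Int.mul_ediv_cancel_left _ hii.ne']
  nlinarith

lemma toNat_one_sub_a {i j : I} (hij : i ≠ j) :
    (1 - cd.a i j).toNat = (-cd.a i j).toNat + 1 := by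
  have := cd.a_nonpos hij
  omega

lemma c_eq_neg_d_mul_toNat {i j : I} (hij : i ≠ j) :
    cd.c i j = -(cd.d i * (-cd.a i j).toNat) := by
  have := cd.a_nonpos hij
  rw [cd.c_eq_d_mul_a hij, Int.toNat_of_nonneg (by omega)]
  ring

lemma dotN_add_right (ν μ μ' : I →₀ ℕ) : cd.dotN ν (μ + μ') = cd.dotN ν μ + cd.dotN ν μ' := by
  classical
  simp only [dotN, ← Finsupp.sum_add]
  refine Finsupp.sum_congr fun i _ => Finsupp.sum_add_index ?_ ?_ <;> intros <;> push_cast <;> ring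

lemma dotN_nsmul_right (ν μ : I →₀ ℕ) (n : ℕ) : cd.dotN ν (n • μ) = n * cd.dotN ν μ := by
  induction n with
  | zero => simp [dotN]
  | succ n ih => rw [succ_nsmul, dotN_add_right, ih]; push_cast; ring

lemma dotN_δN (i j : I) : cd.dotN (δN i) (δN j) = cd.c i j := by
  simp only [dotN, δN]
  rw [Finsupp.sum_single_index, Finsupp.sum_single_index] <;> simp

end CartanDatum

section Homogeneity

variable [DecidableEq I] {𝔽 : Type} [Field 𝔽]

lemma wt_mul (w u : FreeMonoid I) : wt (w * u) = wt w + wt u := by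
  simp only [wt, FreeMonoid.toList_mul, ← Multiset.coe_add, map_add]

lemma wt_of (i : I) : wt (FreeMonoid.of i) = δN i := by
  simp [wt, δN]

lemma isHomog_single (w : FreeMonoid I) (a : 𝔽) : IsHomog (wt w) (MonoidAlgebra.single w a) :=
  fun _ hu => by rw [Finset.mem_singleton.mp (Finsupp.support_single_subset hu)]

lemma IsHomog.mul {ν μ : I →₀ ℕ} {x y : FA 𝔽 I} (hx : IsHomog ν x) (hy : IsHomog μ y) :
    IsHomog (ν + μ) (x * y) := by
  classical
  intro w hw
  obtain ⟨a, ha, b, hb, rfl⟩ := Finset.mem_mul.mp (MonoidAlgebra.support_coeff_mul_subset x y hw)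
  rw [wt_mul, hx a ha, hy b hb]

lemma IsHomog.smul {ν : I →₀ ℕ} {x : FA 𝔽 I} (hx : IsHomog ν x) (a : 𝔽) : IsHomog ν (a • x) :=
  fun w hw => hx w (Finsupp.support_smul hw)

lemma isHomog_θ (i : I) : IsHomog (δN i) (θ 𝔽 i) :=
  wt_of i ▸ isHomog_single _ _

lemma IsHomog.pow {ν : I →₀ ℕ} {x : FA 𝔽 I} (hx : IsHomog ν x) (n : ℕ) :
    IsHomog (n • ν) (x ^ n) := by
  induction n with
  | zero => simpa [wt, MonoidAlgebra.one_def] using isHomog_single (1 : FreeMonoid I) (1 : 𝔽)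
  | succ n ih => rw [succ_nsmul, pow_succ]; exact ih.mul hx

lemma isHomog_θdiv (cd : CartanDatum I) (v : 𝔽) (i : I) (n : ℕ) :
    IsHomog (n • δN i) (θdiv cd v i n) :=
  ((isHomog_θ i).pow n).smul _

end Homogeneity

section DividedPowers

variable [DecidableEq I] {𝔽 : Type} [Field 𝔽] (cd : CartanDatum I) (v : 𝔽)

lemma θdiv_zero (i : I) : θdiv cd v i 0 = 1 := by
  simp [θdiv, qfact]

lemma θdiv_mul_θdiv (i : I) (p q : ℕ) :
    θdiv cd v i p * θdiv cd v i q
      = (qfact (v ^ cd.d i) p * qfact (v ^ cd.d i) q)⁻¹ • θ 𝔽 i ^ (p + q) := by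
  rw [θdiv, θdiv, smul_mul_smul_comm, pow_add, mul_inv]

lemma Dij_eq_sum_antidiagonal (g : I → I → 𝔽) (i j : I) :
    Dij cd v g i j = ∑ x ∈ antidiagonal (1 - cd.a i j).toNat,
      ((-1) ^ x.1 * (g i j)⁻¹ ^ x.1) • (θdiv cd v i x.1 * θ 𝔽 j * θdiv cd v i x.2) :=
  (Finset.Nat.sum_antidiagonal_eq_sum_range_succ
    (fun p q => ((-1 : 𝔽) ^ p * (g i j)⁻¹ ^ p) • (θdiv cd v i p * θ 𝔽 j * θdiv cd v i q)) _).symm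

end DividedPowers

section TwistedDerivations

variable [DecidableEq I] {𝔽 : Type} [Field 𝔽]

/-- The defining properties of the maps `r_i` of the paper. -/
structure IsTwistedRightDeriv (cd : CartanDatum I) (v : 𝔽) (β : MultForm I 𝔽)
    (r : I → FA 𝔽 I →ₗ[𝔽] FA 𝔽 I) : Prop where
  map_one : ∀ i, r i 1 = 0
  map_θ : ∀ i j, r i (θ 𝔽 j) = if i = j then 1 else 0
  map_mul : ∀ i ν μ x y, IsHomog ν x → IsHomog μ y →
    r i (x * y) = (v ^ (-(cd.dotN (δN i) μ)) * β.f (δN i) μ) • (r i x * y) + x * r i y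

namespace IsTwistedRightDeriv

variable {cd : CartanDatum I} {v : 𝔽} {β : MultForm I 𝔽} {r : I → FA 𝔽 I →ₗ[𝔽] FA 𝔽 I}
  (hr : IsTwistedRightDeriv cd v β r)
include hr

lemma map_θ_pow_of_ne {l i : I} (hli : l ≠ i) (n : ℕ) : r l (θ 𝔽 i ^ n) = 0 := by
  induction n with
  | zero => exact hr.map_one l
  | succ n ih =>
    rw [pow_succ', hr.map_mul l _ _ _ _ (isHomog_θ i) ((isHomog_θ i).pow n), hr.map_θ, if_neg hli,
      ih]
    simp

lemma map_θdiv_of_ne {l i : I} (hli : l ≠ i) (n : ℕ) : r l (θdiv cd v i n) = 0 := by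
  rw [θdiv, map_smul, hr.map_θ_pow_of_ne hli, smul_zero]

lemma map_θdiv_zero (l i : I) : r l (θdiv cd v i 0) = 0 := by
  rw [θdiv_zero, hr.map_one]

lemma map_θ_pow_succ (hβ : β.f (δN i) (δN i) = 1) (h1 : qnum (v ^ cd.d i) 1 ≠ 0) (n : ℕ) :
    r i (θ 𝔽 i ^ (n + 1))
      = ((v ^ cd.d i) ^ (-(n : ℤ)) * qnum (v ^ cd.d i) (n + 1)) • θ 𝔽 i ^ n := by
  induction n with
  | zero => simp [hr.map_θ, qnum_one h1]
  | succ n ih =>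
    rw [pow_succ' _ (n + 1), hr.map_mul i _ _ _ _ (isHomog_θ i) ((isHomog_θ i).pow (n + 1)),
      hr.map_θ, if_pos rfl, ih, cd.dotN_nsmul_right, cd.dotN_δN, β.f_nsmul_right, hβ, one_pow,
      mul_one, one_mul, mul_smul_comm, ← pow_succ', ← add_smul]
    rw [cd.zpow_neg_mul_c_self, zpow_neg_succ_mul_qnum_succ_succ h1]

lemma map_θdiv_succ (hβ : β.f (δN i) (δN i) = 1) (hq : ∀ n, qnum (v ^ cd.d i) (n + 1) ≠ 0)
    (n : ℕ) : r i (θdiv cd v i (n + 1)) = (v ^ cd.d i) ^ (-(n : ℤ)) • θdiv cd v i n := by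
  rw [θdiv, θdiv, map_smul, hr.map_θ_pow_succ hβ (hq 0), smul_smul, smul_smul, qfact_succ]
  congr 1
  field_simp [hq n]

lemma map_mul_θ_mul (l j : I) {ν κ : I →₀ ℕ} {x z : FA 𝔽 I} (hx : IsHomog ν x)
    (hz : IsHomog κ z) :
    r l (x * θ 𝔽 j * z)
      = (v ^ (-(cd.dotN (δN l) (δN j + κ))) * β.f (δN l) (δN j + κ)) • (r l x * θ 𝔽 j * z)
        + (v ^ (-(cd.dotN (δN l) κ)) * β.f (δN l) κ) • (x * r l (θ 𝔽 j) * z)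
        + x * θ 𝔽 j * r l z := by
  rw [mul_assoc, hr.map_mul l _ _ _ _ hx ((isHomog_θ j).mul hz),
    hr.map_mul l _ _ _ _ (isHomog_θ j) hz]
  simp only [mul_add, mul_smul_comm, mul_assoc, add_assoc]

variable {i j : I}

lemma map_serre_monomial_self (hβ : β.f (δN i) (δN i) = 1) (hij : i ≠ j) (p q : ℕ) :
    r i (θdiv cd v i p * θ 𝔽 j * θdiv cd v i q)
      = (v ^ (-(cd.c i j + q * cd.c i i)) * β.f (δN i) (δN j)) •
          (r i (θdiv cd v i p) * θ 𝔽 j * θdiv cd v i q)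
        + θdiv cd v i p * θ 𝔽 j * r i (θdiv cd v i q) := by
  rw [hr.map_mul_θ_mul i j (isHomog_θdiv cd v i p) (isHomog_θdiv cd v i q), hr.map_θ, if_neg hij,
    cd.dotN_add_right, cd.dotN_nsmul_right, cd.dotN_δN, cd.dotN_δN, β.add_right, β.f_nsmul_right,
    hβ, one_pow, mul_one]
  simp

lemma map_serre_monomial_right (hij : i ≠ j) (p q : ℕ) :
    r j (θdiv cd v i p * θ 𝔽 j * θdiv cd v i q)
      = (v ^ (-(q * cd.c j i)) * β.f (δN j) (δN i) ^ q) • (θdiv cd v i p * θdiv cd v i q) := by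
  rw [hr.map_mul_θ_mul j j (isHomog_θdiv cd v i p) (isHomog_θdiv cd v i q),
    hr.map_θdiv_of_ne hij.symm, hr.map_θdiv_of_ne hij.symm, hr.map_θ, if_pos rfl,
    cd.dotN_nsmul_right, cd.dotN_δN, β.f_nsmul_right]
  simp

lemma map_serre_monomial_of_ne {l : I} (hli : l ≠ i) (hlj : l ≠ j) (p q : ℕ) :
    r l (θdiv cd v i p * θ 𝔽 j * θdiv cd v i q) = 0 := by
  rw [hr.map_mul_θ_mul l j (isHomog_θdiv cd v i p) (isHomog_θdiv cd v i q),
    hr.map_θdiv_of_ne hli, hr.map_θdiv_of_ne hli, hr.map_θ, if_neg hlj]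
  simp

variable (hq : ∀ n, qnum (v ^ cd.d i) (n + 1) ≠ 0)
include hq

lemma map_Dij_self (hβ : β.f (δN i) (δN i) = 1) (hij : i ≠ j) :
    r i (Dij cd v (fun a b => β.f (δN a) (δN b)) i j) = 0 := by
  have hu := ne_zero_of_qnum_one_ne_zero (hq 0)
  have hb := β.ne_zero (δN i) (δN j)
  rw [Dij_eq_sum_antidiagonal, cd.toNat_one_sub_a hij, map_sum]
  simp_rw [map_smul, hr.map_serre_monomial_self hβ hij, smul_add, smul_smul]
  rw [Finset.Nat.sum_antidiagonal_succ_add _ _ (fun q => by simp [hr.map_θdiv_zero])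
    (fun p => by simp [hr.map_θdiv_zero])]
  refine sum_eq_zero fun ⟨p, q⟩ hx => ?_
  rw [HasAntidiagonal.mem_antidiagonal] at hx
  simp only [hr.map_θdiv_succ hβ hq, smul_mul_assoc, mul_smul_comm, smul_smul, ← add_smul]
  refine smul_eq_zero_of_left ?_ _
  have e : v ^ (-(cd.c i j + q * cd.c i i)) * (v ^ cd.d i) ^ (-(p : ℤ))
      = (v ^ cd.d i) ^ (-(q : ℤ)) := by
    rw [show -(cd.c i j + q * cd.c i i) = cd.d i * ((p : ℤ) - q) by
      rw [cd.c_eq_neg_d_mul_toNat hij, cd.c_self, ← hx]; push_cast; ring, zpow_mul, ← zpow_add₀ hu]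
    ring_nf
  have hb' : (β.f (δN i) (δN j))⁻¹ ^ (p + 1) * β.f (δN i) (δN j) = (β.f (δN i) (δN j))⁻¹ ^ p := by
    rw [pow_succ, mul_assoc, inv_mul_cancel₀ hb, mul_one]
  rw [← e, pow_succ (-1 : 𝔽), ← hb']
  ring

lemma map_Dij_right (hβ : β.f (δN j) (δN i) = (β.f (δN i) (δN j))⁻¹) (hij : i ≠ j) :
    r j (Dij cd v (fun a b => β.f (δN a) (δN b)) i j) = 0 := by
  rw [Dij_eq_sum_antidiagonal, cd.toNat_one_sub_a hij, map_sum]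
  set N := (-cd.a i j).toNat with hN
  simp_rw [map_smul, hr.map_serre_monomial_right hij, θdiv_mul_θdiv, smul_smul]
  rw [sum_congr rfl fun x hx => by rw [HasAntidiagonal.mem_antidiagonal.mp hx], ← sum_smul]
  refine smul_eq_zero_of_left ?_ _
  calc _ = (β.f (δN i) (δN j))⁻¹ ^ (N + 1) * ((-1) ^ (N + 1) * serreSum (v ^ cd.d i) (N + 1)) := by
        rw [neg_one_pow_mul_serreSum, mul_sum]
        refine sum_congr rfl fun ⟨p, q⟩ hx => ?_
        rw [HasAntidiagonal.mem_antidiagonal] at hx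
        have e : v ^ (-(q * cd.c j i)) = (v ^ cd.d i) ^ ((q : ℤ) * (((N + 1 : ℕ) : ℤ) - 1)) := by
          rw [← zpow_mul, cd.symm, cd.c_eq_neg_d_mul_toNat hij, ← hN]; push_cast; ring_nf
        rw [e, hβ, ← hx, pow_add]
        ring
    _ = 0 := by rw [serreSum_eq_zero hq N.succ_ne_zero, mul_zero, mul_zero]

lemma map_Dij (hβii : β.f (δN i) (δN i) = 1) (hβji : β.f (δN j) (δN i) = (β.f (δN i) (δN j))⁻¹)
    (hij : i ≠ j) (l : I) : r l (Dij cd v (fun a b => β.f (δN a) (δN b)) i j) = 0 := by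
  by_cases hli : l = i
  · subst hli
    exact hr.map_Dij_self hq hβii hij
  by_cases hlj : l = j
  · subst hlj
    exact hr.map_Dij_right hq hβji hij
  rw [Dij_eq_sum_antidiagonal, map_sum]
  exact sum_eq_zero fun x _ => by rw [map_smul, hr.map_serre_monomial_of_ne hli hlj, smul_zero]

end IsTwistedRightDeriv

/-- The defining properties of the maps `ᵢr` of the paper. -/
structure IsTwistedLeftDeriv (cd : CartanDatum I) (v : 𝔽) (β : MultForm I 𝔽)
    (r : I → FA 𝔽 I →ₗ[𝔽] FA 𝔽 I) : Prop where
  map_one : ∀ i, r i 1 = 0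
  map_θ : ∀ i j, r i (θ 𝔽 j) = if i = j then 1 else 0
  map_mul : ∀ i ν μ x y, IsHomog ν x → IsHomog μ y →
    r i (x * y) = r i x * y + (v ^ (-(cd.dotN (δN i) ν)) * β.f ν (δN i)) • (x * r i y)

namespace IsTwistedLeftDeriv

variable {cd : CartanDatum I} {v : 𝔽} {β : MultForm I 𝔽} {r : I → FA 𝔽 I →ₗ[𝔽] FA 𝔽 I}
  (hr : IsTwistedLeftDeriv cd v β r)
include hr

lemma map_θ_pow_of_ne {l i : I} (hli : l ≠ i) (n : ℕ) : r l (θ 𝔽 i ^ n) = 0 := by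
  induction n with
  | zero => exact hr.map_one l
  | succ n ih =>
    rw [pow_succ, hr.map_mul l _ _ _ _ ((isHomog_θ i).pow n) (isHomog_θ i), hr.map_θ, if_neg hli,
      ih]
    simp

lemma map_θdiv_of_ne {l i : I} (hli : l ≠ i) (n : ℕ) : r l (θdiv cd v i n) = 0 := by
  rw [θdiv, map_smul, hr.map_θ_pow_of_ne hli, smul_zero]

lemma map_θdiv_zero (l i : I) : r l (θdiv cd v i 0) = 0 := by
  rw [θdiv_zero, hr.map_one]

lemma map_θ_pow_succ (hβ : β.f (δN i) (δN i) = 1) (h1 : qnum (v ^ cd.d i) 1 ≠ 0) (n : ℕ) :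
    r i (θ 𝔽 i ^ (n + 1))
      = ((v ^ cd.d i) ^ (-(n : ℤ)) * qnum (v ^ cd.d i) (n + 1)) • θ 𝔽 i ^ n := by
  induction n with
  | zero => simp [hr.map_θ, qnum_one h1]
  | succ n ih =>
    rw [pow_succ _ (n + 1), hr.map_mul i _ _ _ _ ((isHomog_θ i).pow (n + 1)) (isHomog_θ i),
      hr.map_θ, if_pos rfl, ih, cd.dotN_nsmul_right, cd.dotN_δN, β.f_nsmul_left, hβ, one_pow,
      mul_one, mul_one, smul_mul_assoc, ← pow_succ, ← add_smul]
    rw [cd.zpow_neg_mul_c_self, zpow_neg_succ_mul_qnum_succ_succ h1, add_comm]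

lemma map_θdiv_succ (hβ : β.f (δN i) (δN i) = 1) (hq : ∀ n, qnum (v ^ cd.d i) (n + 1) ≠ 0)
    (n : ℕ) : r i (θdiv cd v i (n + 1)) = (v ^ cd.d i) ^ (-(n : ℤ)) • θdiv cd v i n := by
  rw [θdiv, θdiv, map_smul, hr.map_θ_pow_succ hβ (hq 0), smul_smul, smul_smul, qfact_succ]
  congr 1
  field_simp [hq n]

lemma map_mul_θ_mul (l j : I) {ν κ : I →₀ ℕ} {x z : FA 𝔽 I} (hx : IsHomog ν x)
    (hz : IsHomog κ z) :
    r l (x * θ 𝔽 j * z)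
      = r l x * θ 𝔽 j * z
        + (v ^ (-(cd.dotN (δN l) ν)) * β.f ν (δN l)) • (x * r l (θ 𝔽 j) * z)
        + (v ^ (-(cd.dotN (δN l) (ν + δN j))) * β.f (ν + δN j) (δN l)) • (x * θ 𝔽 j * r l z) := by
  rw [hr.map_mul l _ _ _ _ (hx.mul (isHomog_θ j)) hz, hr.map_mul l _ _ _ _ hx (isHomog_θ j)]
  simp only [add_mul, smul_mul_assoc, mul_assoc]

variable {i j : I}

lemma map_serre_monomial_self (hβ : β.f (δN i) (δN i) = 1) (hij : i ≠ j) (p q : ℕ) :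
    r i (θdiv cd v i p * θ 𝔽 j * θdiv cd v i q)
      = r i (θdiv cd v i p) * θ 𝔽 j * θdiv cd v i q
        + (v ^ (-(p * cd.c i i + cd.c i j)) * β.f (δN j) (δN i)) •
          (θdiv cd v i p * θ 𝔽 j * r i (θdiv cd v i q)) := by
  rw [hr.map_mul_θ_mul i j (isHomog_θdiv cd v i p) (isHomog_θdiv cd v i q), hr.map_θ, if_neg hij,
    cd.dotN_add_right, cd.dotN_nsmul_right, cd.dotN_δN, cd.dotN_δN, β.add_left, β.f_nsmul_left,
    hβ, one_pow, one_mul]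
  simp

lemma map_serre_monomial_right (hij : i ≠ j) (p q : ℕ) :
    r j (θdiv cd v i p * θ 𝔽 j * θdiv cd v i q)
      = (v ^ (-(p * cd.c j i)) * β.f (δN i) (δN j) ^ p) • (θdiv cd v i p * θdiv cd v i q) := by
  rw [hr.map_mul_θ_mul j j (isHomog_θdiv cd v i p) (isHomog_θdiv cd v i q),
    hr.map_θdiv_of_ne hij.symm, hr.map_θdiv_of_ne hij.symm, hr.map_θ, if_pos rfl,
    cd.dotN_nsmul_right, cd.dotN_δN, β.f_nsmul_left]
  simp

lemma map_serre_monomial_of_ne {l : I} (hli : l ≠ i) (hlj : l ≠ j) (p q : ℕ) :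
    r l (θdiv cd v i p * θ 𝔽 j * θdiv cd v i q) = 0 := by
  rw [hr.map_mul_θ_mul l j (isHomog_θdiv cd v i p) (isHomog_θdiv cd v i q),
    hr.map_θdiv_of_ne hli, hr.map_θdiv_of_ne hli, hr.map_θ, if_neg hlj]
  simp

variable (hq : ∀ n, qnum (v ^ cd.d i) (n + 1) ≠ 0)
include hq

lemma map_Dij_self (hβii : β.f (δN i) (δN i) = 1)
    (hβji : β.f (δN j) (δN i) = (β.f (δN i) (δN j))⁻¹) (hij : i ≠ j) :
    r i (Dij cd v (fun a b => β.f (δN a) (δN b)) i j) = 0 := by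
  have hu := ne_zero_of_qnum_one_ne_zero (hq 0)
  rw [Dij_eq_sum_antidiagonal, cd.toNat_one_sub_a hij, map_sum]
  simp_rw [map_smul, hr.map_serre_monomial_self hβii hij, smul_add, smul_smul]
  rw [Finset.Nat.sum_antidiagonal_succ_add _ _ (fun q => by simp [hr.map_θdiv_zero])
    (fun p => by simp [hr.map_θdiv_zero])]
  refine sum_eq_zero fun ⟨p, q⟩ hx => ?_
  rw [HasAntidiagonal.mem_antidiagonal] at hx
  simp only [hr.map_θdiv_succ hβii hq, smul_mul_assoc, mul_smul_comm, smul_smul, ← add_smul]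
  refine smul_eq_zero_of_left ?_ _
  have e : v ^ (-(p * cd.c i i + cd.c i j)) * (v ^ cd.d i) ^ (-(q : ℤ))
      = (v ^ cd.d i) ^ (-(p : ℤ)) := by
    rw [show -(p * cd.c i i + cd.c i j) = cd.d i * ((q : ℤ) - p) by
      rw [cd.c_eq_neg_d_mul_toNat hij, cd.c_self, ← hx]; push_cast; ring, zpow_mul, ← zpow_add₀ hu]
    ring_nf
  rw [hβji, ← e, pow_succ (-1 : 𝔽), pow_succ]
  ring

lemma map_Dij_right (hij : i ≠ j) :
    r j (Dij cd v (fun a b => β.f (δN a) (δN b)) i j) = 0 := by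
  have hb := β.ne_zero (δN i) (δN j)
  rw [Dij_eq_sum_antidiagonal, cd.toNat_one_sub_a hij, map_sum]
  set N := (-cd.a i j).toNat with hN
  simp_rw [map_smul, hr.map_serre_monomial_right hij, θdiv_mul_θdiv, smul_smul]
  rw [sum_congr rfl fun x hx => by rw [HasAntidiagonal.mem_antidiagonal.mp hx], ← sum_smul]
  refine smul_eq_zero_of_left ?_ _
  calc _ = serreSum (v ^ cd.d i) (N + 1) := by
        refine sum_congr rfl fun ⟨p, q⟩ _ => ?_
        have e : v ^ (-(p * cd.c j i)) = (v ^ cd.d i) ^ ((p : ℤ) * (((N + 1 : ℕ) : ℤ) - 1)) := by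
          rw [← zpow_mul, cd.symm, cd.c_eq_neg_d_mul_toNat hij, ← hN]; push_cast; ring_nf
        rw [e, inv_pow]
        field_simp
    _ = 0 := serreSum_eq_zero hq N.succ_ne_zero

lemma map_Dij (hβii : β.f (δN i) (δN i) = 1) (hβji : β.f (δN j) (δN i) = (β.f (δN i) (δN j))⁻¹)
    (hij : i ≠ j) (l : I) : r l (Dij cd v (fun a b => β.f (δN a) (δN b)) i j) = 0 := by
  by_cases hli : l = i
  · subst hli
    exact hr.map_Dij_self hq hβii hβji hij
  by_cases hlj : l = j
  · subst hlj
    exact hr.map_Dij_right hq hij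
  rw [Dij_eq_sum_antidiagonal, map_sum]
  exact sum_eq_zero fun x _ => by rw [map_smul, hr.map_serre_monomial_of_ne hli hlj, smul_zero]

end IsTwistedLeftDeriv

end TwistedDerivations

end
theorem serre_element_killed_by_ri_ir_general
    {I : Type} [DecidableEq I] (cd : CartanDatum I)
    {𝔽 : Type} [Field 𝔽] [CharZero 𝔽] (v : 𝔽) (hv : Transcendental ℚ v)
    (β : MultForm I 𝔽)
    (hββ : ∀ i j : I, β.f (δN i) (δN j) * β.f (δN j) (δN i) = 1)
    (hβii : ∀ i : I, β.f (δN i) (δN i) = 1)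
    (ri : I → (FA 𝔽 I →ₗ[𝔽] FA 𝔽 I))
    (hri1 : ∀ i, ri i 1 = 0)
    (hriθ : ∀ i j : I, ri i (θ 𝔽 j) = if i = j then 1 else 0)
    (hrim : ∀ (i : I) (ν μ : I →₀ ℕ) (x y : FA 𝔽 I), IsHomog ν x → IsHomog μ y →
      ri i (x * y) = (v ^ (-(cd.dotN (δN i) μ)) * β.f (δN i) μ) • (ri i x * y) + x * ri i y)
    (ir : I → (FA 𝔽 I →ₗ[𝔽] FA 𝔽 I))
    (hir1 : ∀ i, ir i 1 = 0)
    (hirθ : ∀ i j : I, ir i (θ 𝔽 j) = if i = j then 1 else 0)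
    (hirm : ∀ (i : I) (ν μ : I →₀ ℕ) (x y : FA 𝔽 I), IsHomog ν x → IsHomog μ y →
      ir i (x * y) = ir i x * y + (v ^ (-(cd.dotN (δN i) ν)) * β.f ν (δN i)) • (x * ir i y))
    :
    ∀ i j : I, i ≠ j → ∀ l : I,
      ir l (Dij cd v (fun a b => β.f (δN a) (δN b)) i j) = 0 ∧
      ri l (Dij cd v (fun a b => β.f (δN a) (δN b)) i j) = 0 := by
  intro i j hij l
  have hq : ∀ n, qnum (v ^ cd.d i) (n + 1) ≠ 0 :=
    qnum_succ_ne_zero_of_transcendental (hv.zpow_of_pos (cd.d_pos i))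
  have hβji : β.f (δN j) (δN i) = (β.f (δN i) (δN j))⁻¹ := eq_inv_of_mul_eq_one_right (hββ i j)
  exact ⟨IsTwistedLeftDeriv.map_Dij ⟨hir1, hirθ, hirm⟩ hq (hβii i) hβji hij l,
    IsTwistedRightDeriv.map_Dij ⟨hri1, hriθ, hrim⟩ hq (hβii i) hβji hij l⟩

theorem serre_element_killed_by_ri_ir
    {I : Type} [Fintype I] [DecidableEq I] (cd : CartanDatum I)
    {𝔽 : Type} [Field 𝔽] [CharZero 𝔽] (v : 𝔽) (hv : Transcendental ℚ v)
    (α β : MultForm I 𝔽)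
    (hαβ : ∀ i j : I, β.f (δN i) (δN j) * α.f (δN j) (δN i)
      = β.f (δN j) (δN i) * α.f (δN i) (δN j))
    (hββ : ∀ i j : I, β.f (δN i) (δN j) * β.f (δN j) (δN i) = 1)
    (hβii : ∀ i : I, β.f (δN i) (δN i) = 1)
    (ri : I → (FA 𝔽 I →ₗ[𝔽] FA 𝔽 I))
    (hri1 : ∀ i, ri i 1 = 0)
    (hriθ : ∀ i j : I, ri i (θ 𝔽 j) = if i = j then 1 else 0)
    (hrim : ∀ (i : I) (ν μ : I →₀ ℕ) (x y : FA 𝔽 I), IsHomog ν x → IsHomog μ y →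
      ri i (x * y) = (v ^ (-(cd.dotN (δN i) μ)) * β.f (δN i) μ) • (ri i x * y) + x * ri i y)
    (ir : I → (FA 𝔽 I →ₗ[𝔽] FA 𝔽 I))
    (hir1 : ∀ i, ir i 1 = 0)
    (hirθ : ∀ i j : I, ir i (θ 𝔽 j) = if i = j then 1 else 0)
    (hirm : ∀ (i : I) (ν μ : I →₀ ℕ) (x y : FA 𝔽 I), IsHomog ν x → IsHomog μ y →
      ir i (x * y) = ir i x * y + (v ^ (-(cd.dotN (δN i) ν)) * β.f ν (δN i)) • (x * ir i y))
    :
    ∀ i j : I, i ≠ j → ∀ l : I,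
      ir l (Dij cd v (fun a b => β.f (δN a) (δN b)) i j) = 0 ∧
      ri l (Dij cd v (fun a b => β.f (δN a) (δN b)) i j) = 0 :=
  serre_element_killed_by_ri_ir_general cd v hv β hββ hβii ri hri1 hriθ hrim ir hir1 hirθ hirm
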